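/- Define, for integer T ≥ 1, P̃(T) = (1/8) e^{-T} Σ_{y=T+1}^{∞} T^y/y! and L̃(T) = (1/4) e^{-T} T^T/T! + (3/64) e^{-T/2} (T/2)^T/T!. Then for all integers T ≥ 5, P̃(T) > L̃(T). -/
import Mathlib


open Real

/-- `P̃(T) = (1/8) e^{-T} Σ_{y=T+1}^∞ T^y/y!`, the Poisson(T) upper tail beyond `T`, scaled. -/
noncomputable def Ptilde (T : ℕ) : ℝ :=
  (1 / 8) * Real.exp (-(T : ℝ)) *
    ∑' y : ℕ, (T : ℝ) ^ (y + T + 1) / (Nat.factorial (y + T + 1))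

/-- `L̃(T) = (1/4) e^{-T} T^T/T! + (3/64) e^{-T/2} (T/2)^T/T!`. -/
noncomputable def Ltilde (T : ℕ) : ℝ :=
  (1 / 4) * Real.exp (-(T : ℝ)) * (T : ℝ) ^ T / (Nat.factorial T)
    + (3 / 64) * Real.exp (-((T : ℝ) / 2)) * ((T : ℝ) / 2) ^ T / (Nat.factorial T)

lemma nat_key (T : ℕ) (hT : 5 ≤ T) : ∀ k : ℕ,
    5 ^ k * 120 * (T + k).factorial ≤ T ^ k * T.factorial * (5 + k).factorial := by
  intro k
  induction k with
  | zero => simp [Nat.factorial, Nat.mul_comm]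
  | succ k ih =>
    have h1 : (T + (k + 1)).factorial = (T + k + 1) * (T + k).factorial := rfl
    have h2 : (5 + (k + 1)).factorial = (5 + k + 1) * (5 + k).factorial := rfl
    have key : 5 * (T + k + 1) ≤ T * (5 + k + 1) := by nlinarith
    calc 5 ^ (k + 1) * 120 * (T + (k + 1)).factorial
        = (5 * (T + k + 1)) * (5 ^ k * 120 * (T + k).factorial) := by rw [h1]; ring
      _ ≤ (T * (5 + k + 1)) * (T ^ k * T.factorial * (5 + k).factorial) :=
          Nat.mul_le_mul key ih
      _ = T ^ (k + 1) * T.factorial * (5 + (k + 1)).factorial := by rw [h2]; ring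

lemma term_real (T k : ℕ) (hT : 5 ≤ T) :
    (5 : ℝ) ^ k * 120 / (Nat.factorial (5 + k)) * ((T : ℝ) ^ T / T.factorial)
      ≤ (T : ℝ) ^ (T + k) / (Nat.factorial (T + k)) := by
  have hT0 : (0 : ℝ) < (T : ℝ) := by exact_mod_cast Nat.lt_of_lt_of_le (by norm_num) hT
  have hcast : (5 : ℝ) ^ k * 120 * (Nat.factorial (T + k))
      ≤ (T : ℝ) ^ k * T.factorial * (Nat.factorial (5 + k)) := by
    exact_mod_cast nat_key T hT k
  rw [div_mul_div_comm, div_le_div_iff₀ (by positivity) (by positivity)]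
  have hpow : (T : ℝ) ^ (T + k) = (T : ℝ) ^ T * (T : ℝ) ^ k := pow_add _ _ _
  have hTT : (0 : ℝ) ≤ (T : ℝ) ^ T := by positivity
  rw [hpow]
  nlinarith [mul_le_mul_of_nonneg_left hcast hTT]

theorem Ptilde_gt_Ltilde : ∀ T : ℕ, 5 ≤ T → Ptilde T > Ltilde T := by
  intro T hT
  have hT0 : (0 : ℝ) < (T : ℝ) := by exact_mod_cast Nat.lt_of_lt_of_le (by norm_num) hT
  set X : ℝ := (T : ℝ) ^ T / T.factorial with hXdef
  have hX : 0 < X := by rw [hXdef]; positivity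
  clear_value X
  have hE : (0 : ℝ) < Real.exp (-(T : ℝ)) := Real.exp_pos _
  -- summability
  have hs : Summable (fun y : ℕ => (T : ℝ) ^ (y + T + 1) / (Nat.factorial (y + T + 1))) := by
    have h := Real.summable_pow_div_factorial (T : ℝ)
    have h2 := (summable_nat_add_iff (f := fun n : ℕ => (T : ℝ) ^ n / (Nat.factorial n))
      (T + 1)).mpr h
    simpa [← Nat.add_assoc] using h2
  -- lower bound each of the first 7 terms
  have key : ∀ y : ℕ, (5 : ℝ) ^ (y + 1) * 120 / (Nat.factorial (5 + (y + 1)))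
      * ((T : ℝ) ^ T / T.factorial)
      ≤ (T : ℝ) ^ (y + T + 1) / (Nat.factorial (y + T + 1)) := by
    intro y
    have h := term_real T (y + 1) hT
    rwa [show T + (y + 1) = y + T + 1 by omega] at h
  have hpartial : ∑ y ∈ Finset.range 7,
      (T : ℝ) ^ (y + T + 1) / (Nat.factorial (y + T + 1))
      ≤ ∑' y : ℕ, (T : ℝ) ^ (y + T + 1) / (Nat.factorial (y + T + 1)) :=
    Summable.sum_le_tsum _ (fun i _ => by positivity) hs
  have k0 := key 0; have k1 := key 1; have k2 := key 2; have k3 := key 3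
  have k4 := key 4; have k5 := key 5; have k6 := key 6
  rw [← hXdef] at k0 k1 k2 k3 k4 k5 k6
  norm_num [Nat.factorial] at k0 k1 k2 k3 k4 k5 k6
  have hsum7 : (217715897 / 100000000 : ℝ) * X ≤ ∑ y ∈ Finset.range 7,
      (T : ℝ) ^ (y + T + 1) / (Nat.factorial (y + T + 1)) := by
    rw [Finset.sum_range_succ, Finset.sum_range_succ, Finset.sum_range_succ,
      Finset.sum_range_succ, Finset.sum_range_succ, Finset.sum_range_succ,
      Finset.sum_range_one]
    norm_num [Nat.factorial]
    linarith
  have hS : (217715897 / 100000000 : ℝ) * X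
      ≤ ∑' y : ℕ, (T : ℝ) ^ (y + T + 1) / (Nat.factorial (y + T + 1)) :=
    le_trans hsum7 hpartial
  -- bound q = exp(1/2)/2
  have hq2 : Real.exp (1 / 2 : ℝ) ^ 2 = Real.exp 1 := by
    rw [← Real.exp_nat_mul]; norm_num
  have hqlt : Real.exp (1 / 2 : ℝ) < (16488 / 10000) := by
    have he : Real.exp 1 < (2.7182818286) := Real.exp_one_lt_d9
    have h2 : Real.exp (1 / 2 : ℝ) ^ 2 < ((16488 / 10000) : ℝ) ^ 2 := by
      rw [hq2]; nlinarith
    exact lt_of_pow_lt_pow_left₀ 2 (by norm_num) h2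
  have hqpos : (0 : ℝ) < Real.exp (1 / 2 : ℝ) / 2 := by positivity
  have hqle1 : Real.exp (1 / 2 : ℝ) / 2 ≤ 1 := by nlinarith
  have hqT : (Real.exp (1 / 2 : ℝ) / 2) ^ T ≤ (Real.exp (1 / 2 : ℝ) / 2) ^ 5 :=
    pow_le_pow_of_le_one hqpos.le hqle1 hT
  have hq5 : (Real.exp (1 / 2 : ℝ) / 2) ^ 5 < ((8244 / 10000) : ℝ) ^ 5 := by
    apply pow_lt_pow_left₀ _ hqpos.le (by norm_num)
    nlinarith
  have hqTbound : (Real.exp (1 / 2 : ℝ) / 2) ^ T < (3809 / 10000) := by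
    calc (Real.exp (1 / 2 : ℝ) / 2) ^ T ≤ (Real.exp (1 / 2 : ℝ) / 2) ^ 5 := hqT
      _ < ((8244 / 10000) : ℝ) ^ 5 := hq5
      _ < (3809 / 10000) := by norm_num
  -- rewrite Ltilde
  have hexp : Real.exp (-((T : ℝ) / 2))
      = Real.exp (-(T : ℝ)) * Real.exp (1 / 2 : ℝ) ^ T := by
    rw [← Real.exp_nat_mul, ← Real.exp_add]
    ring_nf
  have hLt : Ltilde T = Real.exp (-(T : ℝ))
      * ((1 / 4) * X + (3 / 64) * (Real.exp (1 / 2 : ℝ) / 2) ^ T * X) := by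
    unfold Ltilde
    rw [hexp, hXdef, div_pow, div_pow]
    ring
  have hPt : (1 / 8) * Real.exp (-(T : ℝ)) * ((217715897 / 100000000 : ℝ) * X)
      ≤ Ptilde T := by
    unfold Ptilde
    have := mul_le_mul_of_nonneg_left hS (by positivity :
      (0 : ℝ) ≤ (1 / 8) * Real.exp (-(T : ℝ)))
    linarith
  rw [gt_iff_lt, hLt]
  refine lt_of_lt_of_le ?_ hPt
  have hfin : (1 / 4) * X + (3 / 64) * (Real.exp (1 / 2 : ℝ) / 2) ^ T * X
      < (1 / 8) * ((217715897 / 100000000 : ℝ) * X) := by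
    nlinarith [mul_lt_mul_of_pos_right hqTbound hX]
  calc Real.exp (-(T : ℝ)) * ((1 / 4) * X + (3 / 64) * (Real.exp (1 / 2 : ℝ) / 2) ^ T * X)
      < Real.exp (-(T : ℝ)) * ((1 / 8) * ((217715897 / 100000000 : ℝ) * X)) :=
        mul_lt_mul_of_pos_left hfin hE
    _ = (1 / 8) * Real.exp (-(T : ℝ)) * ((217715897 / 100000000 : ℝ) * X) := by ring
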